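/- arXiv:2408.12018 — 2 statements merged into one kernel-verified Lean document; each statement's English description precedes it below -/
import Mathlib

section
/- Let ℙ', P̂, ℙ be probability measures on a compact Ξ ⊆ ℝ^d of diameter ≤ 2M with W₁(ℙ,ℙ') ≤ d₁, W₁(P̂,ℙ) ≤ β, and set ℙ_c = (d₁/(β+d₁))·P̂ + (β/(β+d₁))·ℙ'. Then for n ≥ 1, W_n(ℙ_c, ℙ')^n ≤ (d₁/(β+d₁))·W_n(P̂,ℙ')^n ≤ d₁ · (2M)^{n−1}. -/
open MeasureTheory ProbabilityTheory

lemma integrable_of_bdd {Y : Type*} [MeasurableSpace Y] {μ : Measure Y} [IsFiniteMeasure μ]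
    {f : Y → ℝ} (hf : AEStronglyMeasurable f μ) {C : ℝ} (hC : ∀ y, |f y| ≤ C) :
    Integrable f μ :=
  (integrable_const C).mono' hf (Filter.Eventually.of_forall fun y => by simpa using hC y)

lemma glue_coupling {X : Type*} [MeasurableSpace X] [MetricSpace X] [BorelSpace X]
    [PolishSpace X] [Nonempty X]
    (π₁ π₂ : Measure (X × X)) [IsProbabilityMeasure π₁] [IsProbabilityMeasure π₂]
    (h : π₁.map Prod.snd = π₂.map Prod.fst)
    {C : ℝ} (hC : ∀ x y : X, dist x y ≤ C) :
    ∃ τ : Measure (X × X), IsProbabilityMeasure τ ∧ τ.map Prod.fst = π₁.map Prod.fst ∧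
      τ.map Prod.snd = π₂.map Prod.snd ∧
      ∫ p, dist p.1 p.2 ∂τ ≤ ∫ p, dist p.1 p.2 ∂π₁ + ∫ p, dist p.1 p.2 ∂π₂ := by
  classical
  set κ : Kernel X X := π₂.condKernel with hκdef
  set κ' : Kernel (X × X) X := κ.comap Prod.snd measurable_snd with hκ'
  set μ : Measure ((X × X) × X) := π₁ ⊗ₘ κ' with hμ
  have hg : Measurable fun p : (X × X) × X => (p.1.2, p.2) :=
    (measurable_snd.comp measurable_fst).prodMk measurable_snd
  have hgτ : Measurable fun p : (X × X) × X => (p.1.1, p.2) :=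
    (measurable_fst.comp measurable_fst).prodMk measurable_snd
  have key : μ.map (fun p => (p.1.2, p.2)) = π₂ := by
    ext s hs
    rw [Measure.map_apply hg hs, hμ, Measure.compProd_apply (hg hs)]
    have heq : ∀ p : X × X,
        κ' p (Prod.mk p ⁻¹' ((fun p : (X × X) × X => (p.1.2, p.2)) ⁻¹' s))
          = κ p.2 (Prod.mk p.2 ⁻¹' s) := by
      intro p
      rw [hκ', Kernel.comap_apply]
      rfl
    simp_rw [heq]
    rw [← lintegral_map (Kernel.measurable_kernel_prodMk_left hs) measurable_snd, h]
    have h2 : π₂.map Prod.fst = π₂.fst := rfl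
    rw [h2, ← Measure.compProd_apply hs, hκdef, π₂.disintegrate π₂.condKernel]
  have hfst : μ.map Prod.fst = π₁ := Measure.fst_compProd π₁ κ'
  refine ⟨μ.map (fun p => (p.1.1, p.2)), ?_, ?_, ?_, ?_⟩
  · exact Measure.isProbabilityMeasure_map hgτ.aemeasurable
  · rw [Measure.map_map measurable_fst hgτ, ← hfst,
      Measure.map_map measurable_fst measurable_fst]
    rfl
  · rw [Measure.map_map measurable_snd hgτ, ← key,
      Measure.map_map measurable_snd hg]
    rfl
  · have hC0 : 0 ≤ C := le_trans dist_nonneg (hC (Classical.arbitrary X) (Classical.arbitrary X))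
    have hdc : Continuous fun q : X × X => dist q.1 q.2 := continuous_fst.dist continuous_snd
    have habs : ∀ (x y : X), |dist x y| ≤ C := fun x y => by
      rw [abs_of_nonneg dist_nonneg]; exact hC x y
    have hi1 : Integrable (fun p : (X × X) × X => dist p.1.1 p.1.2) μ :=
      integrable_of_bdd ((continuous_fst.fst.dist continuous_fst.snd).aestronglyMeasurable)
        (fun p => habs _ _)
    have hi2 : Integrable (fun p : (X × X) × X => dist p.1.2 p.2) μ :=
      integrable_of_bdd ((continuous_fst.snd.dist continuous_snd).aestronglyMeasurable)
        (fun p => habs _ _)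
    calc ∫ p, dist p.1 p.2 ∂(μ.map fun p => (p.1.1, p.2))
        = ∫ p : (X × X) × X, dist p.1.1 p.2 ∂μ := by
          rw [integral_map hgτ.aemeasurable hdc.aestronglyMeasurable]
      _ ≤ ∫ p : (X × X) × X, dist p.1.1 p.1.2 + dist p.1.2 p.2 ∂μ := by
          refine integral_mono (integrable_of_bdd
            ((continuous_fst.fst.dist continuous_snd).aestronglyMeasurable)
            (fun p => habs _ _)) (hi1.add hi2) (fun p => dist_triangle _ _ _)
      _ = ∫ p : (X × X) × X, dist p.1.1 p.1.2 ∂μ + ∫ p : (X × X) × X, dist p.1.2 p.2 ∂μ :=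
          integral_add hi1 hi2
      _ = ∫ p, dist p.1 p.2 ∂π₁ + ∫ p, dist p.1 p.2 ∂π₂ := by
          rw [← hfst, ← key,
            integral_map measurable_fst.aemeasurable hdc.aestronglyMeasurable,
            integral_map hg.aemeasurable hdc.aestronglyMeasurable]

/-- The `l_n`-Wasserstein distance: `n`-th root of the infimum over couplings of
the expected `n`-th power of the distance. -/
noncomputable def Wdist {X : Type*} [MeasurableSpace X] [MetricSpace X]
    (n : ℝ) (P Q : Measure X) : ℝ :=
  (sInf {r | ∃ π : Measure (X × X),
      π.map Prod.fst = P ∧ π.map Prod.snd = Q ∧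
      r = ∫ p, dist p.1 p.2 ^ n ∂π}) ^ (1 / n)

theorem mixture_wasserstein_bound {d : ℕ}
    (Ξ : Set (EuclideanSpace ℝ (Fin d))) (hΞ : IsCompact Ξ)
    (M : ℝ) (hM : 0 < M) (hdiam : ∀ x ∈ Ξ, ∀ y ∈ Ξ, dist x y ≤ 2 * M)
    (P' Phat P : Measure Ξ) [IsProbabilityMeasure P'] [IsProbabilityMeasure Phat]
    [IsProbabilityMeasure P]
    (d₁ β : ℝ) (hd₁ : 0 < d₁) (hβ : 0 < β)
    (hPP' : Wdist 1 P P' ≤ d₁) (hPhatP : Wdist 1 Phat P ≤ β)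
    (Pc : Measure Ξ)
    (hPc : Pc = ENNReal.ofReal (d₁ / (β + d₁)) • Phat +
        ENNReal.ofReal (β / (β + d₁)) • P')
    (n : ℝ) (hn : 1 ≤ n) :
    Wdist n Pc P' ^ n ≤ (d₁ / (β + d₁)) * Wdist n Phat P' ^ n ∧
      (d₁ / (β + d₁)) * Wdist n Phat P' ^ n ≤ d₁ * (2 * M) ^ (n - 1) := by
  have hβd : (0:ℝ) < β + d₁ := by linarith
  set a := d₁ / (β + d₁) with ha_def
  set b := β / (β + d₁) with hb_def
  have ha : 0 < a := div_pos hd₁ hβd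
  have hb : 0 < b := div_pos hβ hβd
  have hab : a + b = 1 := by rw [ha_def, hb_def]; field_simp; ring
  have hn0 : n ≠ 0 := ne_of_gt (by linarith)
  haveI : PolishSpace Ξ := hΞ.isClosed.polishSpace
  haveI : Nonempty Ξ := by
    by_contra hE
    rw [not_nonempty_iff] at hE
    have h1 : (P' : Measure Ξ) Set.univ = 1 := measure_univ
    simp [Set.univ_eq_empty_iff.mpr hE] at h1
  set S : ℝ → Measure Ξ → Measure Ξ → Set ℝ := fun m P Q =>
    {r | ∃ π : Measure (Ξ × Ξ), π.map Prod.fst = P ∧ π.map Prod.snd = Q ∧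
      r = ∫ p, dist p.1 p.2 ^ m ∂π} with hS
  have hWdef : ∀ (m : ℝ) (P Q : Measure Ξ), Wdist m P Q = sInf (S m P Q) ^ (1/m) :=
    fun _ _ _ => rfl
  have hSnonneg : ∀ (m : ℝ) (P Q : Measure Ξ), ∀ r ∈ S m P Q, 0 ≤ r := by
    rintro m P Q r ⟨π, -, -, rfl⟩
    exact integral_nonneg fun p => Real.rpow_nonneg dist_nonneg _
  have hbdd : ∀ m P Q, BddBelow (S m P Q) := fun m P Q => ⟨0, fun r hr => hSnonneg m P Q r hr⟩
  have hInfnonneg : ∀ m P Q, 0 ≤ sInf (S m P Q) := fun m P Q =>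
    Real.sInf_nonneg (hSnonneg m P Q)
  have hSne : ∀ (m : ℝ) (P0 Q0 : Measure Ξ), IsProbabilityMeasure P0 →
      IsProbabilityMeasure Q0 → (S m P0 Q0).Nonempty := by
    intro m P0 Q0 hP0 hQ0
    haveI := hP0; haveI := hQ0
    refine ⟨∫ p, dist p.1 p.2 ^ m ∂(P0.prod Q0), P0.prod Q0, ?_, ?_, rfl⟩
    · rw [Measure.map_fst_prod]; simp
    · rw [Measure.map_snd_prod]; simp
  have hpow : ∀ (m : ℝ), m ≠ 0 → ∀ P0 Q0 : Measure Ξ,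
      Wdist m P0 Q0 ^ m = sInf (S m P0 Q0) := by
    intro m hm P0 Q0
    rw [hWdef, ← Real.rpow_mul (hInfnonneg m P0 Q0), one_div_mul_cancel hm, Real.rpow_one]
  have hPP'' : sInf (S 1 P P') ≤ d₁ := by
    have h := hPP'
    rw [hWdef] at h
    simpa using h
  have hPhat'' : sInf (S 1 Phat P) ≤ β := by
    have h := hPhatP
    rw [hWdef] at h
    simpa using h
  have hprob : ∀ (π : Measure (Ξ × Ξ)) (P0 : Measure Ξ), IsProbabilityMeasure P0 →
      π.map Prod.fst = P0 → IsProbabilityMeasure π := by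
    intro π P0 hP0 hm
    constructor
    have h1 : π.map Prod.fst Set.univ = 1 := by rw [hm]; exact hP0.measure_univ
    rwa [Measure.map_apply measurable_fst MeasurableSet.univ, Set.preimage_univ] at h1
  have hfc : Continuous fun p : Ξ × Ξ => dist p.1 p.2 ^ n := by
    have hc : Continuous fun x : ℝ => x ^ n := by
      rw [continuous_iff_continuousAt]
      intro x
      exact Real.continuousAt_rpow_const x n (Or.inr (by linarith))
    exact hc.comp (continuous_fst.dist continuous_snd)
  have hdistle : ∀ p : Ξ × Ξ, dist p.1 p.2 ≤ 2 * M := fun p => by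
    rw [Subtype.dist_eq]
    exact hdiam _ p.1.2 _ p.2.2
  have hfb : ∀ p : Ξ × Ξ, |dist p.1 p.2 ^ n| ≤ (2*M) ^ n := fun p => by
    rw [abs_of_nonneg (Real.rpow_nonneg dist_nonneg _)]
    exact Real.rpow_le_rpow dist_nonneg (hdistle p) (by linarith)
  have hfint : ∀ (π : Measure (Ξ × Ξ)), IsFiniteMeasure π →
      Integrable (fun p : Ξ × Ξ => dist p.1 p.2 ^ n) π := by
    intro π hπ
    exact integrable_of_bdd hfc.aestronglyMeasurable hfb
  -- Part 1
  have part1 : sInf (S n Pc P') ≤ a * sInf (S n Phat P') := by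
    have hstep : ∀ r ∈ S n Phat P', sInf (S n Pc P') ≤ a * r := by
      rintro r ⟨π, hπf, hπs, rfl⟩
      haveI := hprob π Phat inferInstance hπf
      set Δ : Measure (Ξ × Ξ) := P'.map (fun x => (x, x)) with hΔ
      have hdm : Measurable fun x : Ξ => (x, x) := measurable_id.prodMk measurable_id
      haveI : IsProbabilityMeasure Δ := Measure.isProbabilityMeasure_map hdm.aemeasurable
      set π' : Measure (Ξ × Ξ) := ENNReal.ofReal a • π + ENNReal.ofReal b • Δ with hπ'
      have hmf : π'.map Prod.fst = Pc := by
        rw [hπ', Measure.map_add _ _ measurable_fst, Measure.map_smul, Measure.map_smul,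
          hπf, hΔ, Measure.map_map measurable_fst hdm]
        have hcomp : (Prod.fst ∘ fun x : Ξ => (x, x)) = id := rfl
        rw [hcomp, Measure.map_id, hPc]
      have hms : π'.map Prod.snd = P' := by
        rw [hπ', Measure.map_add _ _ measurable_snd, Measure.map_smul, Measure.map_smul,
          hπs, hΔ, Measure.map_map measurable_snd hdm]
        have hcomp : (Prod.snd ∘ fun x : Ξ => (x, x)) = id := rfl
        rw [hcomp, Measure.map_id, ← add_smul, ← ENNReal.ofReal_add ha.le hb.le, hab,
          ENNReal.ofReal_one, one_smul]
      have hzero : ∫ p, dist p.1 p.2 ^ n ∂Δ = 0 := by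
        rw [hΔ, integral_map hdm.aemeasurable hfc.aestronglyMeasurable]
        simp [Real.zero_rpow hn0]
      have hint : ∫ p, dist p.1 p.2 ^ n ∂π' = a * ∫ p, dist p.1 p.2 ^ n ∂π := by
        rw [hπ', integral_add_measure
          (((hfint π inferInstance)).smul_measure ENNReal.ofReal_ne_top)
          (((hfint Δ inferInstance)).smul_measure ENNReal.ofReal_ne_top),
          integral_smul_measure, integral_smul_measure,
          ENNReal.toReal_ofReal ha.le, ENNReal.toReal_ofReal hb.le, hzero]
        simp [smul_eq_mul]
      exact csInf_le (hbdd n Pc P') ⟨π', hmf, hms, hint.symm⟩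
    have h2 : sInf (S n Pc P') / a ≤ sInf (S n Phat P') :=
      le_csInf (hSne n Phat P' inferInstance inferInstance)
        (fun r hr => (div_le_iff₀ ha).mpr (by rw [mul_comm]; exact hstep r hr))
    calc sInf (S n Pc P') = (sInf (S n Pc P') / a) * a := by field_simp
      _ ≤ sInf (S n Phat P') * a := mul_le_mul_of_nonneg_right h2 ha.le
      _ = a * sInf (S n Phat P') := mul_comm _ _
  -- Part 2
  set K := (2*M) ^ (n-1) with hKdef
  have hK : (0:ℝ) < K := Real.rpow_pos_of_pos (by linarith) _
  have part2base : sInf (S n Phat P') ≤ (β + d₁) * K := by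
    refine le_of_forall_pos_le_add fun ε hε => ?_
    set δ := ε / (2 * K) with hδdef
    have hδ : 0 < δ := by positivity
    obtain ⟨r₁, hr₁S, hr₁⟩ := exists_lt_of_csInf_lt
      (hSne 1 Phat P inferInstance inferInstance)
      (show sInf (S 1 Phat P) < β + δ by linarith)
    obtain ⟨r₂, hr₂S, hr₂⟩ := exists_lt_of_csInf_lt
      (hSne 1 P P' inferInstance inferInstance)
      (show sInf (S 1 P P') < d₁ + δ by linarith)
    obtain ⟨π₁, hπ₁f, hπ₁s, rfl⟩ := hr₁S
    obtain ⟨π₂, hπ₂f, hπ₂s, rfl⟩ := hr₂S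
    haveI := hprob π₁ Phat inferInstance hπ₁f
    haveI := hprob π₂ P inferInstance hπ₂f
    obtain ⟨τ, hτprob, hτf, hτs, hτint⟩ := glue_coupling π₁ π₂
      (by rw [hπ₁s, hπ₂f]) (fun x y => hdistle (x, y))
    haveI := hτprob
    have hone : ∀ π : Measure (Ξ × Ξ),
        (∫ p, dist p.1 p.2 ^ (1:ℝ) ∂π) = ∫ p, dist p.1 p.2 ∂π := by
      intro π; simp [Real.rpow_one]
    have hpt : ∀ p : Ξ × Ξ, dist p.1 p.2 ^ n ≤ dist p.1 p.2 * K := by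
      intro p
      rcases eq_or_lt_of_le (dist_nonneg : (0:ℝ) ≤ dist p.1 p.2) with h0 | h0
      · rw [← h0, Real.zero_rpow hn0, zero_mul]
      · calc dist p.1 p.2 ^ n = dist p.1 p.2 ^ ((1:ℝ) + (n-1)) := by ring_nf
          _ = dist p.1 p.2 ^ (1:ℝ) * dist p.1 p.2 ^ (n-1) := Real.rpow_add h0 _ _
          _ ≤ dist p.1 p.2 * K := by
              rw [Real.rpow_one]
              exact mul_le_mul_of_nonneg_left
                (Real.rpow_le_rpow dist_nonneg (hdistle p) (by linarith)) dist_nonneg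
    have hdint : Integrable (fun p : Ξ × Ξ => dist p.1 p.2) τ :=
      integrable_of_bdd (continuous_fst.dist continuous_snd).aestronglyMeasurable
        (fun p => by rw [abs_of_nonneg dist_nonneg]; exact hdistle p)
    have hmem : (∫ p, dist p.1 p.2 ^ n ∂τ) ∈ S n Phat P' :=
      ⟨τ, by rw [hτf, hπ₁f], by rw [hτs, hπ₂s], rfl⟩
    have hchain : ∫ p, dist p.1 p.2 ^ n ∂τ ≤ (∫ p, dist p.1 p.2 ∂τ) * K := by
      calc ∫ p, dist p.1 p.2 ^ n ∂τ ≤ ∫ p, dist p.1 p.2 * K ∂τ :=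
            integral_mono (hfint τ inferInstance) (hdint.mul_const K) hpt
        _ = (∫ p, dist p.1 p.2 ∂τ) * K := integral_mul_const K _
    have h1' : ∫ p, dist p.1 p.2 ∂π₁ < β + δ := by rw [← hone π₁]; exact hr₁
    have h2' : ∫ p, dist p.1 p.2 ∂π₂ < d₁ + δ := by rw [← hone π₂]; exact hr₂
    have hτd : ∫ p, dist p.1 p.2 ∂τ ≤ (β + δ) + (d₁ + δ) := by linarith
    have hstart : sInf (S n Phat P') ≤ (∫ p, dist p.1 p.2 ∂τ) * K :=
      le_trans (csInf_le (hbdd n Phat P') hmem) hchain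
    have hmul : (∫ p, dist p.1 p.2 ∂τ) * K ≤ ((β + δ) + (d₁ + δ)) * K :=
      mul_le_mul_of_nonneg_right hτd hK.le
    have hδK : 2 * δ * K = ε := by
      rw [hδdef]; field_simp
    nlinarith [hK.le]
  have part2 : a * sInf (S n Phat P') ≤ d₁ * K := by
    have haβ : a * (β + d₁) = d₁ := by rw [ha_def]; field_simp
    calc a * sInf (S n Phat P') ≤ a * ((β + d₁) * K) :=
          mul_le_mul_of_nonneg_left part2base ha.le
      _ = (a * (β + d₁)) * K := by ring
      _ = d₁ * K := by rw [haβ]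
  refine ⟨?_, ?_⟩
  · rw [hpow n hn0, hpow n hn0]; exact part1
  · rw [hpow n hn0]; exact part2
end

section
/- Let Ξ ⊆ ℝ^d be compact, ℙ, ℚ probability measures on Ξ, and suppose the Kantorovich distance ρ(ℙ,ℚ) = sup_{g 1-Lipschitz} |E_ℙ[g] − E_ℚ[g]| ≤ δ. Let G : Ξ → ℝ be Lipschitz with constant κ_G and suppose ℙ∘G⁻¹ has density on ℝ bounded by C. Then |ℙ(G ≤ 0) − ℚ(G ≤ 0)| ≤ √(2·κ_G·C·δ). -/
/-!
Smooth the indicator of `(-∞, 0]` by piecewise-linear ramps of width `ε`, one below and one above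
it. Composed with `G`, a ramp is `κG / ε`-Lipschitz, so its `P`- and `Q`-means differ by at most
`κG δ / ε`. Replacing a ramp by the indicator costs at most `C ε / 2` under `P`, since `G₊P` has
density at most `C` and ramp and indicator differ by a triangle of area `ε / 2`; under `Q` the
replacement only helps, because the ramps squeeze the indicator. Minimising `C ε / 2 + κG δ / ε`
over `ε` gives `√(2 κG C δ)`.
-/

open MeasureTheory

/-- The Kantorovich (dual Wasserstein-1) metric: supremum over 1-Lipschitz test
functions of the difference of expectations. -/
noncomputable def kantorovich {X : Type*} [MeasurableSpace X] [MetricSpace X]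
    (P Q : Measure X) : ℝ :=
  sSup {r | ∃ g : X → ℝ, LipschitzWith 1 g ∧ r = |∫ x, g x ∂P - ∫ x, g x ∂Q|}

open Set

/-- The paper's smoothings `L_{-ε}` and `L_{ε}` of `1_{(-∞, 0]}` are `ramp ε 0` and `ramp ε ε`. -/
noncomputable def ramp (ε a y : ℝ) : ℝ := max 0 (min 1 ((a - y) / ε))

section Ramp

variable {ε : ℝ} (a : ℝ)

lemma continuous_ramp : Continuous (ramp ε a) := by
  unfold ramp; fun_prop

lemma ramp_nonneg (y : ℝ) : 0 ≤ ramp ε a y := le_max_left _ _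

lemma ramp_le_one (y : ℝ) : ramp ε a y ≤ 1 := max_le zero_le_one (min_le_left _ _)

lemma integrable_ramp (μ : Measure ℝ) [IsFiniteMeasure μ] : Integrable (ramp ε a) μ :=
  (integrable_const 1).mono' (continuous_ramp a).aestronglyMeasurable
    (ae_of_all _ fun y => by
      rw [Real.norm_eq_abs, abs_of_nonneg (ramp_nonneg a y)]; exact ramp_le_one a y)

lemma lipschitzWith_ramp (hε : 0 < ε) : LipschitzWith (Real.toNNReal ε⁻¹) (ramp ε a) := by
  have h : LipschitzWith (Real.toNNReal ε⁻¹) fun y : ℝ => (a - y) / ε :=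
    LipschitzWith.of_dist_le_mul fun y z => by
      rw [Real.coe_toNNReal _ (inv_nonneg.2 hε.le), Real.dist_eq, Real.dist_eq, ← sub_div,
        abs_div, abs_of_pos hε, sub_sub_sub_cancel_left, abs_sub_comm, div_eq_inv_mul]
  exact (h.const_min 1).const_max 0

lemma ramp_of_le (hε : 0 < ε) {y : ℝ} (hy : y ≤ a - ε) : ramp ε a y = 1 := by
  rw [ramp, min_eq_left ((le_div_iff₀ hε).2 (by linarith)), max_eq_right zero_le_one]

lemma ramp_of_ge (hε : 0 < ε) {y : ℝ} (hy : a ≤ y) : ramp ε a y = 0 := by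
  rw [ramp, max_eq_left ((min_le_right _ _).trans
    (div_nonpos_of_nonpos_of_nonneg (by linarith) hε.le))]

lemma ramp_of_mem_Icc (hε : 0 < ε) {y : ℝ} (hy : y ∈ Icc (a - ε) a) :
    ramp ε a y = (a - y) / ε := by
  rw [ramp, min_eq_right ((div_le_one hε).2 (by linarith [hy.1])),
    max_eq_right (div_nonneg (by linarith [hy.2]) hε.le)]

lemma ramp_sub_indicator_Iic (hε : 0 < ε) :
    ramp ε a - (Iic (a - ε)).indicator (1 : ℝ → ℝ) =
      (Ioc (a - ε) a).indicator fun y => (a - y) / ε := by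
  ext y
  simp only [Pi.sub_apply, indicator, mem_Iic, mem_Ioc, Pi.one_apply]
  split_ifs with h1 h2 h2
  · linarith [h2.1]
  · rw [ramp_of_le a hε h1, sub_self]
  · rw [ramp_of_mem_Icc a hε ⟨(not_le.1 h1).le, h2.2⟩, sub_zero]
  · rw [ramp_of_ge a hε (not_le.1 fun h => h2 ⟨not_le.1 h1, h⟩).le, sub_zero]

lemma indicator_Iic_sub_ramp (hε : 0 < ε) :
    (Iic a).indicator (1 : ℝ → ℝ) - ramp ε a =
      (Ioc (a - ε) a).indicator fun y => (y - (a - ε)) / ε := by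
  ext y
  simp only [Pi.sub_apply, indicator, mem_Iic, mem_Ioc, Pi.one_apply]
  split_ifs with h1 h2 h2
  · rw [ramp_of_mem_Icc a hε ⟨h2.1.le, h1⟩]; field_simp; ring
  · rw [ramp_of_le a hε (not_lt.1 fun h => h2 ⟨h, h1⟩), sub_self]
  · exact absurd h2.2 h1
  · rw [ramp_of_ge a hε (not_le.1 h1).le, sub_zero]

lemma indicator_Iic_le_ramp (hε : 0 < ε) : (Iic (a - ε)).indicator (1 : ℝ → ℝ) ≤ ramp ε a :=
  sub_nonneg.1 <| by
    rw [ramp_sub_indicator_Iic a hε]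
    exact indicator_nonneg fun y hy => div_nonneg (by linarith [hy.2]) hε.le

lemma ramp_le_indicator_Iic (hε : 0 < ε) : ramp ε a ≤ (Iic a).indicator (1 : ℝ → ℝ) :=
  sub_nonneg.1 <| by
    rw [indicator_Iic_sub_ramp a hε]
    exact indicator_nonneg fun y hy => div_nonneg (by linarith [hy.1]) hε.le

lemma integrable_ramp_sub_indicator_Iic (hε : 0 < ε) :
    Integrable (ramp ε a - (Iic (a - ε)).indicator (1 : ℝ → ℝ)) := by
  rw [ramp_sub_indicator_Iic a hε, integrable_indicator_iff measurableSet_Ioc]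
  exact Continuous.integrableOn_Ioc (by fun_prop)

lemma integrable_indicator_Iic_sub_ramp (hε : 0 < ε) :
    Integrable ((Iic a).indicator (1 : ℝ → ℝ) - ramp ε a) := by
  rw [indicator_Iic_sub_ramp a hε, integrable_indicator_iff measurableSet_Ioc]
  exact Continuous.integrableOn_Ioc (by fun_prop)

lemma integral_ramp_sub_indicator_Iic (hε : 0 < ε) :
    ∫ y, (ramp ε a - (Iic (a - ε)).indicator (1 : ℝ → ℝ)) y = ε / 2 := by
  rw [ramp_sub_indicator_Iic a hε, integral_indicator measurableSet_Ioc, integral_div,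
    ← intervalIntegral.integral_of_le (by linarith),
    intervalIntegral.integral_comp_sub_left (fun x => x), integral_id]
  field_simp; ring

lemma integral_indicator_Iic_sub_ramp (hε : 0 < ε) :
    ∫ y, ((Iic a).indicator (1 : ℝ → ℝ) - ramp ε a) y = ε / 2 := by
  rw [indicator_Iic_sub_ramp a hε, integral_indicator measurableSet_Ioc, integral_div,
    ← intervalIntegral.integral_of_le (by linarith),
    intervalIntegral.integral_comp_sub_right (fun x => x), integral_id]
  field_simp; ring

end Ramp

lemma integral_le_mul_integral_of_le_smul {α : Type*} [MeasurableSpace α] {μ ν : Measure α}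
    {C : ℝ} (hC : 0 ≤ C) (hμν : μ ≤ ENNReal.ofReal C • ν) {φ : α → ℝ} (hφ : 0 ≤ φ)
    (hφν : Integrable φ ν) : ∫ x, φ x ∂μ ≤ C * ∫ x, φ x ∂ν := by
  refine (integral_mono_measure hμν (ae_of_all _ hφ)
    (hφν.smul_measure ENNReal.ofReal_ne_top)).trans_eq ?_
  rw [integral_smul_measure, ENNReal.toReal_ofReal hC, smul_eq_mul]

section IndicatorOne

variable {α : Type*} [MeasurableSpace α] {μ : Measure α} [IsFiniteMeasure μ] {f : α → ℝ}
  (hf : Integrable f μ) {s : Set α} (hs : MeasurableSet s)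
include hf hs

lemma integral_sub_indicator_one :
    ∫ x, (f - s.indicator (1 : α → ℝ)) x ∂μ = ∫ x, f x ∂μ - μ.real s := by
  rw [← integral_indicator_one hs]
  exact integral_sub hf ((integrable_const 1).indicator hs)

lemma integral_indicator_one_sub :
    ∫ x, (s.indicator (1 : α → ℝ) - f) x ∂μ = μ.real s - ∫ x, f x ∂μ := by
  rw [← integral_indicator_one hs]
  exact integral_sub ((integrable_const 1).indicator hs) hf

end IndicatorOne

section RampBounds

variable {ε : ℝ} (hε : 0 < ε) (a : ℝ) (μ : Measure ℝ) [IsFiniteMeasure μ]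
include hε

lemma measureReal_Iic_sub_le_integral_ramp : μ.real (Iic (a - ε)) ≤ ∫ y, ramp ε a y ∂μ := by
  rw [← integral_indicator_one measurableSet_Iic]
  exact integral_mono ((integrable_const 1).indicator measurableSet_Iic) (integrable_ramp a μ)
    (indicator_Iic_le_ramp a hε)

lemma integral_ramp_le_measureReal_Iic : ∫ y, ramp ε a y ∂μ ≤ μ.real (Iic a) := by
  rw [← integral_indicator_one measurableSet_Iic]
  exact integral_mono (integrable_ramp a μ) ((integrable_const 1).indicator measurableSet_Iic)
    (ramp_le_indicator_Iic a hε)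

variable {C : ℝ} (hC : 0 ≤ C) (hμ : μ ≤ ENNReal.ofReal C • volume)
include hC hμ

lemma integral_ramp_le_measureReal_Iic_add :
    ∫ y, ramp ε a y ∂μ ≤ μ.real (Iic (a - ε)) + C * ε / 2 := by
  have h := integral_le_mul_integral_of_le_smul hC hμ
    (sub_nonneg.2 (indicator_Iic_le_ramp a hε)) (integrable_ramp_sub_indicator_Iic a hε)
  rw [integral_sub_indicator_one (integrable_ramp a μ) measurableSet_Iic,
    integral_ramp_sub_indicator_Iic a hε] at h
  linarith

lemma measureReal_Iic_le_integral_ramp_add :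
    μ.real (Iic a) ≤ ∫ y, ramp ε a y ∂μ + C * ε / 2 := by
  have h := integral_le_mul_integral_of_le_smul hC hμ
    (sub_nonneg.2 (ramp_le_indicator_Iic a hε)) (integrable_indicator_Iic_sub_ramp a hε)
  rw [integral_indicator_one_sub (integrable_ramp a μ) measurableSet_Iic,
    integral_indicator_Iic_sub_ramp a hε] at h
  linarith

end RampBounds

lemma abs_measureReal_Iic_sub_le_of_ramp {ε C η : ℝ} (hε : 0 < ε) (hC : 0 ≤ C)
    {μ ν : Measure ℝ} [IsFiniteMeasure μ] [IsFiniteMeasure ν]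
    (hμ : μ ≤ ENNReal.ofReal C • volume)
    (hη : ∀ a, |∫ y, ramp ε a y ∂μ - ∫ y, ramp ε a y ∂ν| ≤ η) (t : ℝ) :
    |μ.real (Iic t) - ν.real (Iic t)| ≤ C * ε / 2 + η := by
  have hup := integral_ramp_le_measureReal_Iic_add hε (t + ε) μ hC hμ
  have hν := measureReal_Iic_sub_le_integral_ramp hε (t + ε) ν
  rw [add_sub_cancel_right] at hup hν
  have hlow := measureReal_Iic_le_integral_ramp_add hε t μ hC hμ
  have hν' := integral_ramp_le_measureReal_Iic hε t ν
  have h₁ := abs_le.1 (hη (t + ε))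
  have h₂ := abs_le.1 (hη t)
  rw [abs_sub_le_iff]
  constructor <;> linarith

section Kantorovich

variable {X : Type*} [MeasurableSpace X] [MetricSpace X] [CompactSpace X] [OpensMeasurableSpace X]

lemma abs_integral_sub_le_diam (μ : Measure X) [IsProbabilityMeasure μ] {g : X → ℝ}
    (hg : LipschitzWith 1 g) (x₀ : X) : |∫ x, g x ∂μ - g x₀| ≤ Metric.diam (univ : Set X) := by
  have hg_int : Integrable g μ := hg.continuous.integrable_of_hasCompactSupport (.of_compactSpace g)
  have hbound (x : X) : ‖g x - g x₀‖ ≤ Metric.diam (univ : Set X) := by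
    rw [← dist_eq_norm]
    exact (hg.dist_le_mul x x₀).trans (by
      simpa using Metric.dist_le_diam_of_mem isCompact_univ.isBounded (mem_univ x) (mem_univ x₀))
  calc |∫ x, g x ∂μ - g x₀| = ‖∫ x, (g x - g x₀) ∂μ‖ := by
        rw [integral_sub hg_int (integrable_const _), integral_const, probReal_univ, one_smul,
          Real.norm_eq_abs]
    _ ≤ Metric.diam (univ : Set X) := by
        simpa using norm_integral_le_of_norm_le_const (μ := μ) (ae_of_all _ hbound)

variable (P Q : Measure X) [IsProbabilityMeasure P] [IsProbabilityMeasure Q]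

lemma bddAbove_kantorovich :
    BddAbove {r | ∃ g : X → ℝ, LipschitzWith 1 g ∧ r = |∫ x, g x ∂P - ∫ x, g x ∂Q|} := by
  obtain ⟨x₀⟩ := nonempty_of_isProbabilityMeasure P
  refine ⟨2 * Metric.diam (univ : Set X), ?_⟩
  rintro r ⟨g, hg, rfl⟩
  have hP := abs_le.1 (abs_integral_sub_le_diam P hg x₀)
  have hQ := abs_le.1 (abs_integral_sub_le_diam Q hg x₀)
  rw [abs_le]
  constructor <;> linarith

lemma abs_integral_sub_le_mul_kantorovich {K : NNReal} {g : X → ℝ} (hg : LipschitzWith K g) :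
    |∫ x, g x ∂P - ∫ x, g x ∂Q| ≤ K * kantorovich P Q := by
  rcases eq_or_ne K 0 with rfl | hK
  · obtain ⟨x₀⟩ := nonempty_of_isProbabilityMeasure P
    obtain ⟨c, rfl⟩ : ∃ c, g = fun _ => c :=
      ⟨g x₀, funext fun x => (LipschitzWith.zero_iff g).1 hg x x₀⟩
    simp
  · have hg' : LipschitzWith 1 fun x => (K : ℝ)⁻¹ * g x := by
      have h := (lipschitzWith_smul (K : ℝ)⁻¹).comp hg
      rwa [nnnorm_inv, NNReal.nnnorm_eq, inv_mul_cancel₀ hK] at h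
    have h := le_csSup (bddAbove_kantorovich P Q) ⟨_, hg', rfl⟩
    rw [integral_const_mul, integral_const_mul, ← mul_sub, abs_mul, abs_inv, NNReal.abs_eq,
      inv_mul_le_iff₀ (by positivity)] at h
    exact h

lemma abs_integral_map_sub_le_mul_kantorovich {G : X → ℝ} {K L : NNReal} (hG : LipschitzWith K G)
    {h : ℝ → ℝ} (hh : LipschitzWith L h) :
    |∫ y, h y ∂P.map G - ∫ y, h y ∂Q.map G| ≤ L * K * kantorovich P Q := by
  rw [integral_map hG.continuous.aemeasurable hh.continuous.aestronglyMeasurable,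
    integral_map hG.continuous.aemeasurable hh.continuous.aestronglyMeasurable, ← NNReal.coe_mul]
  exact abs_integral_sub_le_mul_kantorovich P Q (hh.comp hG)

end Kantorovich

lemma le_sqrt_of_forall_le_mul_add_div {x a b : ℝ} (ha : 0 < a)
    (h : ∀ ε > 0, x ≤ a * ε / 2 + b / ε) : x ≤ √(2 * a * b) := by
  rcases le_or_gt x 0 with hx | hx
  · exact hx.trans (Real.sqrt_nonneg _)
  -- `ε = x / a` is where the right-hand side is minimal once `x = √(2ab)`.
  have hxa := h (x / a) (div_pos hx ha)
  rw [show a * (x / a) / 2 + b / (x / a) = x / 2 + a * b / x by field_simp] at hxa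
  have hhalf : x / 2 * x ≤ a * b := (le_div_iff₀ hx).1 (by linarith)
  rw [Real.le_sqrt' hx]
  linarith

theorem chance_constraint_probability_gap_general {d : ℕ}
    (Ξ : Set (EuclideanSpace ℝ (Fin d))) (hΞ : IsCompact Ξ)
    (P Q : Measure Ξ) [IsProbabilityMeasure P] [IsProbabilityMeasure Q]
    (δ : ℝ) (hρ : kantorovich P Q ≤ δ)
    (G : Ξ → ℝ) (κG : NNReal) (hG : LipschitzWith κG G)
    (C : ℝ) (hC : 0 < C)
    (f : ℝ → ℝ) (hf : P.map G = MeasureTheory.volume.withDensity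
      (fun y => ENNReal.ofReal (f y)))
    (hfC : ∀ y, f y ≤ C) :
    |(P {x | G x ≤ 0}).toReal - (Q {x | G x ≤ 0}).toReal| ≤
      Real.sqrt (2 * (κG : ℝ) * C * δ) := by
  have : CompactSpace Ξ := isCompact_iff_compactSpace.mp hΞ
  have hμ : P.map G ≤ ENNReal.ofReal C • volume := by
    rw [hf, ← withDensity_const]
    exact withDensity_mono (ae_of_all _ fun y => ENNReal.ofReal_le_ofReal (hfC y))
  have hset (R : Measure Ξ) : (R {x | G x ≤ 0}).toReal = (R.map G).real (Iic 0) := by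
    rw [measureReal_def, Measure.map_apply hG.continuous.measurable measurableSet_Iic]
    rfl
  have hramp (ε : ℝ) (hε : 0 < ε) (a : ℝ) :
      |∫ y, ramp ε a y ∂P.map G - ∫ y, ramp ε a y ∂Q.map G| ≤ κG * δ / ε := by
    refine (abs_integral_map_sub_le_mul_kantorovich P Q hG (lipschitzWith_ramp a hε)).trans ?_
    rw [Real.coe_toNNReal _ (inv_nonneg.2 hε.le), div_eq_inv_mul, ← mul_assoc]
    exact mul_le_mul_of_nonneg_left hρ (by positivity)
  rw [hset P, hset Q]
  refine (le_sqrt_of_forall_le_mul_add_div (b := κG * δ) hC fun ε hε => ?_).trans_eq (by ring_nf)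
  exact abs_measureReal_Iic_sub_le_of_ramp hε hC.le hμ (hramp ε hε) 0

theorem chance_constraint_probability_gap {d : ℕ}
    (Ξ : Set (EuclideanSpace ℝ (Fin d))) (hΞ : IsCompact Ξ)
    (P Q : Measure Ξ) [IsProbabilityMeasure P] [IsProbabilityMeasure Q]
    (δ : ℝ) (hδ : 0 ≤ δ) (hρ : kantorovich P Q ≤ δ)
    (G : Ξ → ℝ) (κG : NNReal) (hκG : 0 < κG) (hG : LipschitzWith κG G)
    (C : ℝ) (hC : 0 < C)
    (f : ℝ → ℝ) (hf : P.map G = MeasureTheory.volume.withDensity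
      (fun y => ENNReal.ofReal (f y)))
    (hfC : ∀ y, f y ≤ C) :
    |(P {x | G x ≤ 0}).toReal - (Q {x | G x ≤ 0}).toReal| ≤
      Real.sqrt (2 * (κG : ℝ) * C * δ) :=
  chance_constraint_probability_gap_general Ξ hΞ P Q δ hρ G κG hG C hC f hf hfC
end
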